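/- For the family H_m (m ≥ 2), the F-polynomials F_{H_m}(u,v) = −(2m+1)u^{v^{−1}−v} + 2u^{−1} + (2m−1) are pairwise distinct: if m₁ ≠ m₂ (both ≥ 2) then F_{H_{m₁}}(u,v) ≠ F_{H_{m₂}}(u,v). In particular the F-polynomial distinguishes infinitely many knotoids, while all H_m share the same index polynomial F_{H_m}(t) = −2 + 2t^{−1} and the same n-th polynomials Z^n_{H_m}(t) (equal to −2+2t^{−1} for n=1 and 0 for n ≥ 2). -/

import Mathlib

/-!
Each quantity entering `F`, the index polynomial and `Zⁿ` depends on a chord of `H m` only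
through its type `a`, `b`, `c`, `dᵢ` or `eᵢ`, so every sum over the `2m + 3` chords collapses
to five terms, the two families weighted by `m`. Type by type, `i(b) = i(c) = -1` and all other
indices vanish, while `g_b = g_c = -1` and `g = v⁻¹ - v` for every other chord. Hence the
coefficient of `u^{v⁻¹ - v}` in `F_{H_m}` is `-(2m + 1)`, which recovers `m`. The chords whose
index is divisible by `n ≥ 2` are those of types `a`, `d`, `e`, and no two of them interact,
so `Zⁿ` vanishes.
-/

open Finsupp

/-- Formal Laurent polynomials in `v` over `ℤ`, used as exponents of `u`. -/
abbrev LaurentExp : Type := ℤ →₀ ℤ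

/-- Formal `ℤ`-linear combinations of symbols `u^p`, `p` a Laurent polynomial in `v`. -/
abbrev FPoly : Type := LaurentExp →₀ ℤ

/-- A combinatorial Gauss diagram of a knotoid diagram: `n` signed directed chords,
whose `2*n` endpoints (an over-endpoint and an under-endpoint for each chord) occupy
distinct positions along the oriented arc.  The two endpoints of the arc itself lie
before position `0` and after position `2*n - 1`. -/
structure GaussDiagram where
  n : ℕ
  sign : Fin n → ℤ
  overEnd : Fin n → Fin (2 * n)
  under : Fin n → Fin (2 * n)
  sign_pm : ∀ c, sign c = 1 ∨ sign c = -1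
  endpoints_inj : Function.Injective (Sum.elim overEnd under)

namespace GaussDiagram

variable (G : GaussDiagram)

/-- Position `p` lies strictly between the two endpoints of chord `c`,
i.e. on the side of `c` NOT containing the endpoints of the arc
(the complement of the lead side of `c`). -/
def between (c : Fin G.n) (p : Fin (2 * G.n)) : Prop :=
  min (G.overEnd c).val (G.under c).val < p.val ∧ p.val < max (G.overEnd c).val (G.under c).val

instance (c : Fin G.n) (p : Fin (2 * G.n)) : Decidable (G.between c p) := by
  unfold between; infer_instance

/-- Chord `e` crosses chord `c`: exactly one endpoint of `e` lies between the endpoints of `c`. -/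
def crosses (c e : Fin G.n) : Prop :=
  e ≠ c ∧ (G.between c (G.overEnd e) ↔ ¬ G.between c (G.under e))

instance (c e : Fin G.n) : Decidable (G.crosses c e) := by
  unfold crosses; infer_instance

/-- The signed contribution of the endpoints of chord `e` lying on the lead side of `c`
(the over-endpoint counts `sign e`, the under-endpoint counts `- sign e`). -/
def contrib (c e : Fin G.n) : ℤ :=
  (if ¬ G.between c (G.overEnd e) then G.sign e else 0)
    + (if ¬ G.between c (G.under e) then - G.sign e else 0)

/-- The intersection index `i(c)`: the sum of the signs of the chord-endpoints lying on
the lead side of `c`, excluding the endpoints of `c` itself. -/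
def i (c : Fin G.n) : ℤ := ∑ e ∈ Finset.univ.erase c, G.contrib c e

/-- `r(c)`: chords crossing `c` whose over-endpoint lies on the lead side of `c`
(chords pointing away from the lead side). -/
def rset (c : Fin G.n) : Finset (Fin G.n) :=
  Finset.univ.filter fun e => G.crosses c e ∧ ¬ G.between c (G.overEnd e)

/-- `l(c)`: chords crossing `c` whose under-endpoint lies on the lead side of `c`
(chords pointing toward the lead side). -/
def lset (c : Fin G.n) : Finset (Fin G.n) :=
  Finset.univ.filter fun e => G.crosses c e ∧ ¬ G.between c (G.under e)

end GaussDiagram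

/-- The reduction map `φ` modulo `m`, realized by canonical representatives in `ℤ`:
for `m ≠ 0` it picks the representative in `[0, m)`; for `m = 0` it is the identity
(no reduction, matching `ℤ[v,v⁻¹]/(v⁰ - 1) = ℤ[v,v⁻¹]`). -/
def redExp (m : ℕ) (k : ℤ) : ℤ := if m = 0 then k else k % (m : ℤ)

namespace GaussDiagram

variable (G : GaussDiagram)

/-- The index function `g_c(v) = Σ_{r ∈ r(c)} sign(r) v^{φ_c(i(r))} - Σ_{l ∈ l(c)} sign(l) v^{φ_c(-i(l))}`,
an element of `ℤ[v,v⁻¹]/(v^{|i(c)|} - 1)` realized via canonical exponent representatives. -/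
noncomputable def gfun (c : Fin G.n) : LaurentExp :=
  (∑ e ∈ G.rset c, G.sign e • Finsupp.single (redExp (G.i c).natAbs (G.i e)) (1 : ℤ))
    - ∑ e ∈ G.lset c, G.sign e • Finsupp.single (redExp (G.i c).natAbs (- G.i e)) (1 : ℤ)

/-- The F-polynomial `F_G(u,v) = Σ_c sign(c) (u^{g_c(v)} - 1)`. -/
noncomputable def F : FPoly :=
  ∑ c : Fin G.n, G.sign c • (Finsupp.single (G.gfun c) (1 : ℤ) - Finsupp.single 0 1)

end GaussDiagram

/-- Over-endpoint positions for the family `H_m`: chord `0` is `a`, chord `1` is `b`,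
chord `2` is `c`, chords `3,…,m+2` are `d₁,…,d_m`, chords `m+3,…,2m+2` are `e₁,…,e_m`. -/
def Hover (m c : ℕ) : ℕ :=
  if c = 0 then 0 else if c = 1 then 2 * m + 5 else if c = 2 then 2
  else if c ≤ m + 2 then 4 * m + 11 - 2 * c else 2 * c - (2 * m + 1)

/-- Under-endpoint positions for the family `H_m`. -/
def Hunder (m c : ℕ) : ℕ :=
  if c = 0 then 3 else if c = 1 then 1 else if c = 2 then 2 * m + 4
  else if c ≤ m + 2 then 2 * c - 2 else 6 * m + 10 - 2 * c

/-- The Gauss diagram of the knotoid diagram `H_m` of Example 4.2: `2m + 3` chords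
`a, b, c, d₁, …, d_m, e₁, …, e_m`, with `sign(a) = sign(dᵢ) = sign(eᵢ) = -1` and
`sign(b) = sign(c) = 1`. -/
def H (m : ℕ) : GaussDiagram where
  n := 2 * m + 3
  sign c := if c.val = 1 ∨ c.val = 2 then 1 else -1
  overEnd c := ⟨Hover m c.val, by have := c.isLt; unfold Hover; split_ifs <;> omega⟩
  under c := ⟨Hunder m c.val, by have := c.isLt; unfold Hunder; split_ifs <;> omega⟩
  sign_pm c := by split_ifs <;> simp
  endpoints_inj := by
    intro x y h
    have hval := congrArg Fin.val h
    rcases x with x | x <;> rcases y with y | y <;>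
      have hx := x.isLt <;> have hy := y.isLt <;>
      simp only [Sum.elim_inl, Sum.elim_inr] at hval <;>
      first
        | (refine congrArg _ (Fin.ext ?_) ;
           simp only [Hover, Hunder] at hval ; split_ifs at hval <;> omega)
        | (exfalso ; simp only [Hover, Hunder] at hval ; split_ifs at hval <;> omega)

namespace GaussDiagram

variable (G : GaussDiagram)

/-- `C_n(G)`: the chords whose intersection index is a multiple of `n`. -/
def Cnset (nn : ℕ) : Finset (Fin G.n) :=
  Finset.univ.filter fun c => (nn : ℤ) ∣ G.i c

/-- `d_n(c)`: the sum of the signs of the endpoints on the lead side of `c` belonging to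
chords of `C_n(G) \ {c}`. -/
def dfun (nn : ℕ) (c : Fin G.n) : ℤ :=
  ∑ e ∈ (G.Cnset nn).erase c, G.contrib c e

/-- The `n`-th polynomial `Z^n_D(t) = Σ_{c ∈ C_n} sign(c) (t^{d_n(c)} - 1)`. -/
noncomputable def Zn (nn : ℕ) : ℤ →₀ ℤ :=
  ∑ c ∈ G.Cnset nn, G.sign c • (Finsupp.single (G.dfun nn c) (1 : ℤ) - Finsupp.single 0 1)

/-- The index polynomial `F_D(t) = Σ_c sign(c)(t^{i(c)} - 1)`. -/
noncomputable def indexPoly : ℤ →₀ ℤ :=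
  ∑ c : Fin G.n, G.sign c • (Finsupp.single (G.i c) (1 : ℤ) - Finsupp.single 0 1)

end GaussDiagram

namespace GaussDiagram

variable (G : GaussDiagram)

lemma not_between_overEnd_self (c : Fin G.n) : ¬ G.between c (G.overEnd c) := by
  unfold between; omega

lemma not_between_under_self (c : Fin G.n) : ¬ G.between c (G.under c) := by
  unfold between; omega

lemma contrib_self (c : Fin G.n) : G.contrib c c = 0 := by
  simp [contrib, G.not_between_overEnd_self, G.not_between_under_self]

lemma i_eq_sum_contrib (c : Fin G.n) : G.i c = ∑ e, G.contrib c e :=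
  Finset.sum_erase _ (G.contrib_self c)

lemma rset_eq_filter_contrib (c : Fin G.n) :
    G.rset c = Finset.univ.filter fun e => G.contrib c e = G.sign e := by
  ext e
  rw [rset, Finset.mem_filter, Finset.mem_filter]
  simp only [crosses, contrib, Finset.mem_univ, true_and]
  rcases G.sign_pm e with h | h <;> rw [h] <;>
    by_cases h1 : G.between c (G.overEnd e) <;> by_cases h2 : G.between c (G.under e) <;>
    simp [h1, h2] <;> rintro rfl <;> exact G.not_between_under_self _ h2

lemma lset_eq_filter_contrib (c : Fin G.n) :
    G.lset c = Finset.univ.filter fun e => G.contrib c e = - G.sign e := by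
  ext e
  rw [lset, Finset.mem_filter, Finset.mem_filter]
  simp only [crosses, contrib, Finset.mem_univ, true_and]
  rcases G.sign_pm e with h | h <;> rw [h] <;>
    by_cases h1 : G.between c (G.overEnd e) <;> by_cases h2 : G.between c (G.under e) <;>
    simp [h1, h2] <;> rintro rfl <;> exact G.not_between_overEnd_self _ h1

lemma Zn_one : G.Zn 1 = G.indexPoly := by
  have hC : G.Cnset 1 = Finset.univ := Finset.filter_true_of_mem fun c _ => by simp
  simp only [Zn, dfun, indexPoly, i, hC]

lemma Zn_eq_zero_of_contrib_eq_zero {nn : ℕ}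
    (h : ∀ c ∈ G.Cnset nn, ∀ e ∈ G.Cnset nn, G.contrib c e = 0) : G.Zn nn = 0 := by
  refine Finset.sum_eq_zero fun c hc => ?_
  have hd : G.dfun nn c = 0 :=
    Finset.sum_eq_zero fun e he => h c hc e (Finset.mem_of_mem_erase he)
  rw [hd, sub_self, smul_zero]

end GaussDiagram

inductive HmChord
  | a | b | c | d | e

namespace HmChord

/-- Chord `k` of `H m` is `a`, `b`, `c`, `d_{k-2}` or `e_{k-m-2}`. -/
def ofIndex (m k : ℕ) : HmChord :=
  if k = 0 then a else if k = 1 then b else if k = 2 then c else if k ≤ m + 2 then d else e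

def sign : HmChord → ℤ
  | b | c => 1
  | _ => -1

def contrib : HmChord → HmChord → ℤ
  | b, a | b, d | c, a | c, d => -1
  | b, e | c, e => 1
  | a, b | d, c | e, c => 1
  | a, c | d, b | e, b => -1
  | _, _ => 0

def index : HmChord → ℤ
  | b | c => -1
  | _ => 0

noncomputable def g : HmChord → LaurentExp
  | b | c => -single 0 1
  | _ => single (-1) 1 - single 1 1

lemma index_eq_zero_of_dvd {nn : ℕ} (hnn : 2 ≤ nn) {k : HmChord} (h : (nn : ℤ) ∣ k.index) :
    k.index = 0 := by
  have not_dvd : ¬ (nn : ℤ) ∣ -1 := fun h => by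
    have := Int.le_of_dvd one_pos (dvd_neg.mp h)
    omega
  cases k <;> first | rfl | exact absurd h not_dvd

lemma contrib_eq_zero_of_index_eq_zero {k l : HmChord} (hk : k.index = 0) (hl : l.index = 0) :
    k.contrib l = 0 := by
  cases k <;> cases l <;> simp_all [index, contrib]

lemma sum_ofIndex {M : Type*} [AddCommMonoid M] (m : ℕ) (f : HmChord → M) :
    ∑ k : Fin (H m).n, f (ofIndex m k) = f a + f b + f c + m • f d + m • f e := by
  rw [Fin.sum_univ_eq_sum_range (fun k => f (ofIndex m k)),
    show (H m).n = 3 + m + m by simp only [H]; ring, Finset.sum_range_add, Finset.sum_range_add]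
  have hd : ∀ k ∈ Finset.range m, f (ofIndex m (3 + k)) = f d := fun k hk => by
    rw [ofIndex, if_neg (by omega), if_neg (by omega), if_neg (by omega),
      if_pos (by simp at hk; omega)]
  have he : ∀ k ∈ Finset.range m, f (ofIndex m (3 + m + k)) = f e := fun k _ => by
    rw [ofIndex, if_neg (by omega), if_neg (by omega), if_neg (by omega), if_neg (by omega)]
  rw [Finset.sum_congr rfl hd, Finset.sum_congr rfl he]
  simp [Finset.sum_range_succ, ofIndex, add_assoc]

end HmChord

open HmChord

lemma H_sign (m : ℕ) (c : Fin (H m).n) : (H m).sign c = (ofIndex m c).sign := by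
  simp only [H, ofIndex]
  split_ifs <;> first | omega | rfl

lemma H_contrib (m : ℕ) (c e : Fin (H m).n) :
    (H m).contrib c e = (ofIndex m c).contrib (ofIndex m e) := by
  have hc : c.val < 2 * m + 3 := c.isLt
  have he : e.val < 2 * m + 3 := e.isLt
  simp only [GaussDiagram.contrib, GaussDiagram.between, H, Hover, Hunder, ofIndex]
  split_ifs <;> first | omega | simp [HmChord.contrib]

lemma H_i (m : ℕ) (c : Fin (H m).n) : (H m).i c = (ofIndex m c).index := by
  rw [GaussDiagram.i_eq_sum_contrib]
  simp only [H_contrib]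
  rw [sum_ofIndex m fun x => (ofIndex m c).contrib x]
  cases ofIndex m c <;> simp [HmChord.contrib, HmChord.index]

lemma H_gfun (m : ℕ) (c : Fin (H m).n) : (H m).gfun c = (ofIndex m c).g := by
  rw [GaussDiagram.gfun, GaussDiagram.rset_eq_filter_contrib,
    GaussDiagram.lset_eq_filter_contrib, Finset.sum_filter, Finset.sum_filter]
  simp only [H_contrib, H_sign, H_i]
  generalize ofIndex m c = k
  rw [sum_ofIndex m fun x => if k.contrib x = x.sign then
      x.sign • single (redExp k.index.natAbs x.index) 1 else 0,
    sum_ofIndex m fun x => if k.contrib x = -x.sign then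
      x.sign • single (redExp k.index.natAbs (-x.index)) 1 else 0]
  cases k <;> simp [HmChord.contrib, HmChord.index, HmChord.sign, HmChord.g, redExp]

lemma H_F (m : ℕ) :
    (H m).F = -(2 * m + 1 : ℤ) • single (single (-1) 1 - single 1 1) 1
      + (2 : ℤ) • single (-single 0 1) 1 + (2 * m - 1 : ℤ) • single 0 1 := by
  rw [GaussDiagram.F]
  simp only [H_sign, H_gfun]
  rw [sum_ofIndex m fun x => x.sign • (single x.g 1 - single 0 1)]
  simp only [HmChord.sign, HmChord.g]
  module

lemma H_F_apply_vInv_sub_v (m : ℕ) :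
    (H m).F (single (-1) 1 - single 1 1) = -(2 * m + 1) := by
  have ne_zero : (single (-1) 1 - single 1 1 : LaurentExp) ≠ 0 := fun h => by
    simpa using DFunLike.congr_fun h (-1)
  have ne_neg_one : (single (-1) 1 - single 1 1 : LaurentExp) ≠ -single 0 1 := fun h => by
    simpa using DFunLike.congr_fun h (-1)
  simp [H_F, ne_zero, ne_neg_one.symm]

lemma H_indexPoly (m : ℕ) :
    (H m).indexPoly = (2 : ℤ) • single (-1 : ℤ) (1 : ℤ) - (2 : ℤ) • single 0 1 := by
  rw [GaussDiagram.indexPoly]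
  simp only [H_sign, H_i]
  rw [sum_ofIndex m fun x => x.sign • (single x.index 1 - single 0 1)]
  simp only [HmChord.sign, HmChord.index]
  module

lemma H_Zn_eq_zero {m nn : ℕ} (hnn : 2 ≤ nn) : (H m).Zn nn = 0 := by
  have index_eq_zero {x} (hx : x ∈ (H m).Cnset nn) : (ofIndex m x).index = 0 :=
    index_eq_zero_of_dvd hnn (H_i m x ▸ (Finset.mem_filter.mp hx).2)
  refine GaussDiagram.Zn_eq_zero_of_contrib_eq_zero _ fun c hc e he => ?_
  rw [H_contrib]
  exact contrib_eq_zero_of_index_eq_zero (index_eq_zero hc) (index_eq_zero he)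

/-- the F-polynomials of the family `H_m` (`m ≥ 2`) are pairwise distinct,
so the F-polynomial distinguishes the knotoids `H_m` from each other, while they all
share the same index polynomial `F_{H_m}(t) = -2 + 2t^{-1}` and the same `n`-th
polynomials (`Z¹ = -2 + 2t^{-1}` and `Z^n = 0` for `n ≥ 2`). -/
theorem Hm_pairwise_distinct :
    (∀ m₁ m₂ : ℕ, 2 ≤ m₁ → 2 ≤ m₂ → m₁ ≠ m₂ → (H m₁).F ≠ (H m₂).F) ∧
    (∀ m : ℕ, 2 ≤ m →
      (H m).indexPoly
        = (2 : ℤ) • Finsupp.single (-1 : ℤ) (1 : ℤ) - (2 : ℤ) • Finsupp.single 0 1 ∧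
      (H m).Zn 1
        = (2 : ℤ) • Finsupp.single (-1 : ℤ) (1 : ℤ) - (2 : ℤ) • Finsupp.single 0 1 ∧
      (∀ nn : ℕ, 2 ≤ nn → (H m).Zn nn = 0)) := by
  refine ⟨fun m₁ m₂ _ _ hne hF => hne ?_, fun m _ =>
    ⟨H_indexPoly m, (H m).Zn_one ▸ H_indexPoly m, fun _ hnn => H_Zn_eq_zero hnn⟩⟩
  have coeff_eq := congrArg (· (single (-1) 1 - single 1 1)) hF
  simp only [H_F_apply_vInv_sub_v] at coeff_eq
  omega
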